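/- arXiv:2502.06096 — 2 statements merged into one kernel-verified Lean document; each statement's English description precedes it below -/
import Mathlib

section
/- Known pre-change coverage guarantee: suppose the pre-change distribution is known, i.e., 𝒫₀ = {F₀}. For every α ∈ (0,1), every T ∈ ℕ, every post-change class 𝒫₁, and every change detection stopping time τ satisfying P_{F₀,∞}(τ ≥ T) > 0, the confidence set C := {t ∈ ℕ : t ≤ τ, M_t < 2/(α r_t)}, constructed with any family (r_t) of almost surely strictly positive random variables, each independent of the observed data, satisfying E[r_t] = P_{F₀,∞}(τ ≥ t), satisfies P_{F₀,T,F₁}(T ∈ C | τ ≥ T) ≥ 1 − α for all F₁ ∈ 𝒫₁. -/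
/-!
Under `P_{F₀,T,F₁}` the observations from time `T` on are i.i.d. `F₁` and those before `T` are
i.i.d. `F₀`. Stopping the forward and the backward `T`-delay e-process at their first crossing of
a level `c` gives Ville's inequality for each: each one ever reaches `c` with probability at most
`1/c`. Whatever `T̂` is, `M_T` equals `1` or a value of one of the two processes, so
`P(M_T ≥ c) ≤ 2/c`. At the independent random level `c = 2/(α r_T)` this averages to
`P(τ ≥ T, T ∉ C) ≤ α E[r_T] = α P_{F₀,∞}(τ ≥ T)`. Finally `{τ ≥ T}` depends only on
`X₁, …, X_{T-1}`, so it has the same probability under `P_{F₀,T,F₁}` as under `P_{F₀,∞}`.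
-/

open MeasureTheory ProbabilityTheory Filter Set
open scoped ENNReal NNReal

namespace SeqChange

variable {𝒳 : Type*} [MeasurableSpace 𝒳]

/-- The σ-algebra on the sequence space generated by the coordinates with indices in `s`. -/
def coordSigma (𝒳 : Type*) [MeasurableSpace 𝒳] (s : Set ℕ) : MeasurableSpace (ℕ → 𝒳) :=
  ⨆ i ∈ s, MeasurableSpace.comap (fun ω : ℕ → 𝒳 => ω i) inferInstance

/-- The natural filtration `σ(X₁, …, Xₙ)` of the observation sequence (observations are
indexed from 1; coordinate 0 is unused). -/
def natFilt (𝒳 : Type*) [MeasurableSpace 𝒳] (n : ℕ) : MeasurableSpace (ℕ → 𝒳) :=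
  coordSigma 𝒳 {i | 1 ≤ i ∧ i ≤ n}

/-- `τ` is a stopping time with respect to the natural filtration of the observation
sequence, taking values in `ℕ ∪ {∞}`. -/
def IsStoppingTimeSeq (τ : (ℕ → 𝒳) → ℕ∞) : Prop :=
  ∀ n : ℕ, MeasurableSet[natFilt 𝒳 n] {ω | τ ω ≤ (n : ℕ∞)}

/-- `P` is the joint law of a sequence of independent observations `X₁, X₂, …` with
`Xₙ ~ ν n` for every `n ≥ 1`: a probability measure whose finite-dimensional
distributions on the coordinates with indices `≥ 1` are the corresponding products. -/
def IsProductLaw (P : Measure (ℕ → 𝒳)) (ν : ℕ → Measure 𝒳) : Prop :=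
  IsProbabilityMeasure P ∧
    ∀ s : Finset ℕ, (∀ i ∈ s, 1 ≤ i) → ∀ A : ℕ → Set 𝒳, (∀ i, MeasurableSet (A i)) →
      P {ω | ∀ i ∈ s, ω i ∈ A i} = ∏ i ∈ s, ν i (A i)

/-- `P` is the law `P_{F₀,T,F₁}`: independent coordinates, `Xₙ ~ F₀` for `n < T` and
`Xₙ ~ F₁` for `n ≥ T`. -/
def IsChangeLaw (P : Measure (ℕ → 𝒳)) (F₀ F₁ : Measure 𝒳) (T : ℕ) : Prop :=
  IsProductLaw P (fun n => if n < T then F₀ else F₁)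

/-- `P` is the law `P_{F₀,∞}`: all coordinates i.i.d. `F₀` (no change ever occurs). -/
def IsNoChangeLaw (P : Measure (ℕ → 𝒳)) (F₀ : Measure 𝒳) : Prop :=
  IsProductLaw P (fun _ => F₀)

/-- Under `Q`, the coordinates with indices in `I` are i.i.d. with law `ν`. -/
def IsIIDOn (Q : Measure (ℕ → 𝒳)) (ν : Measure 𝒳) (I : Set ℕ) : Prop :=
  IsProbabilityMeasure Q ∧
    ∀ s : Finset ℕ, (↑s ⊆ I) → ∀ A : ℕ → Set 𝒳, (∀ i, MeasurableSet (A i)) →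
      Q {ω | ∀ i ∈ s, ω i ∈ A i} = ∏ i ∈ s, ν (A i)

/-- Forward filtration `σ(X_t, …, X_n)`. -/
def fwdFilt (𝒳 : Type*) [MeasurableSpace 𝒳] (t n : ℕ) : MeasurableSpace (ℕ → 𝒳) :=
  coordSigma 𝒳 {i | t ≤ i ∧ i ≤ n}

/-- Backward filtration `σ(X_n, …, X_{t-1})`. -/
def bwdFilt (𝒳 : Type*) [MeasurableSpace 𝒳] (t n : ℕ) : MeasurableSpace (ℕ → 𝒳) :=
  coordSigma 𝒳 {i | n ≤ i ∧ i < t}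

/-- A forward `t`-delay e-process under the class `𝒫₁`: a nonnegative process
`(R n)_{n ≥ t}` adapted to the forward filtration `σ(X_t, …, X_n)` such that for every
`F₁ ∈ 𝒫₁`, every law `Q` under which `X_t, X_{t+1}, …` are i.i.d. `F₁`, and every
stopping time `κ ≥ t` of the forward filtration, `E_Q[R_κ] ≤ 1`. -/
def IsForwardEProcess (𝒫₁ : Set (Measure 𝒳)) (t : ℕ) (R : ℕ → (ℕ → 𝒳) → ℝ≥0∞) : Prop :=
  (∀ n, t ≤ n → Measurable[fwdFilt 𝒳 t n] (R n)) ∧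
    ∀ F₁ ∈ 𝒫₁, ∀ Q : Measure (ℕ → 𝒳), IsIIDOn Q F₁ {i | t ≤ i} →
      ∀ κ : (ℕ → 𝒳) → ℕ, (∀ ω, t ≤ κ ω) →
        (∀ n, MeasurableSet[fwdFilt 𝒳 t n] {ω | κ ω ≤ n}) →
        ∫⁻ ω, R (κ ω) ω ∂Q ≤ 1

/-- A backward `t`-delay e-process under the class `𝒫₀`: a nonnegative process
`(S n)_{1 ≤ n < t}` adapted to the backward filtration `σ(X_n, …, X_{t-1})` such that for
every `F₀ ∈ 𝒫₀`, every law `Q` under which `X₁, …, X_{t-1}` are i.i.d. `F₀`, and every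
stopping time `κ` of the backward filtration with `1 ≤ κ < t`, `E_Q[S_κ] ≤ 1`. -/
def IsBackwardEProcess (𝒫₀ : Set (Measure 𝒳)) (t : ℕ) (S : ℕ → (ℕ → 𝒳) → ℝ≥0∞) : Prop :=
  (∀ n, 1 ≤ n → n < t → Measurable[bwdFilt 𝒳 t n] (S n)) ∧
    ∀ F₀ ∈ 𝒫₀, ∀ Q : Measure (ℕ → 𝒳), IsIIDOn Q F₀ {i | 1 ≤ i ∧ i < t} →
      ∀ κ : (ℕ → 𝒳) → ℕ, (∀ ω, 1 ≤ κ ω ∧ κ ω < t) →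
        (∀ n, MeasurableSet[bwdFilt 𝒳 t n] {ω | n ≤ κ ω}) →
        ∫⁻ ω, S (κ ω) ω ∂Q ≤ 1

/-- The localization statistic `M_t` built from the estimator `T̂`, forward e-processes `R`
and backward e-processes `S`: `M_t = R^{(t)}_{T̂ - 1}` if `t < T̂ ≤ τ < ∞`, `M_t = 1` if
`t = T̂ ≤ τ < ∞`, `M_t = S^{(t)}_{T̂}` if `T̂ < t ≤ τ < ∞`, and `M_t = -∞` if `t > τ` or
`τ = ∞`. -/
noncomputable def eStat (τ : (ℕ → 𝒳) → ℕ∞) (That : (ℕ → 𝒳) → ℕ)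
    (R S : ℕ → ℕ → (ℕ → 𝒳) → ℝ≥0∞) (t : ℕ) (ω : ℕ → 𝒳) : EReal :=
  if (t : ℕ∞) ≤ τ ω ∧ τ ω ≠ ⊤ then
    if t < That ω then ((R t (That ω - 1) ω : ℝ≥0∞) : EReal)
    else if t = That ω then 1
    else ((S t (That ω) ω : ℝ≥0∞) : EReal)
  else ⊥

lemma le_cond_of_measure_diff_le {Ω : Type*} {m : MeasurableSpace Ω} {μ : Measure Ω}
    {s t : Set Ω} (hs : MeasurableSet s) (h0 : μ s ≠ 0) (htop : μ s ≠ ⊤) {ε : ℝ≥0∞}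
    (h : μ (s \ t) ≤ ε * μ s) : 1 - ε ≤ μ[t | s] := by
  rw [cond_apply hs, ← ENNReal.div_eq_inv_mul, ENNReal.le_div_iff_mul_le (.inl h0) (.inl htop),
    ENNReal.sub_mul fun _ _ => htop, one_mul, tsub_le_iff_right]
  exact (measure_le_inter_add_sdiff μ s t).trans (add_le_add_right h _)

lemma measure_prod_le_ofReal_integral {Ω Ω' : Type*} [MeasurableSpace Ω] [MeasurableSpace Ω']
    {P : Measure Ω} [SFinite P] {μ : Measure Ω'} [SFinite μ] {G : Set (Ω × Ω')}
    (hG : MeasurableSet G) {ρ : Ω' → ℝ} (hρ : Integrable ρ μ) (hρ0 : 0 ≤ᵐ[μ] ρ)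
    (h : ∀ᵐ a ∂μ, P ((fun ω => (ω, a)) ⁻¹' G) ≤ ENNReal.ofReal (ρ a)) :
    P.prod μ G ≤ ENNReal.ofReal (∫ a, ρ a ∂μ) := by
  rw [Measure.prod_apply_symm hG, ofReal_integral_eq_lintegral_ofReal hρ hρ0]
  exact lintegral_mono_ae h

lemma two_mul_inv_ofReal_two_div {x : ℝ} (hx : 0 < x) :
    2 * (ENNReal.ofReal (2 / x))⁻¹ = ENNReal.ofReal x := by
  rw [← ENNReal.ofReal_inv_of_pos (by positivity), inv_div, ← ENNReal.ofReal_ofNat 2,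
    ← ENNReal.ofReal_mul zero_le_two]
  congr 1
  ring

/-- Ville's inequality on a window `[a, b]`: stop at the first time `X` reaches `c`. -/
lemma measure_exists_mem_Icc_le_inv {Ω : Type*} {m : MeasurableSpace Ω} {Q : Measure Ω}
    (𝓕 : Filtration ℕ m) {X : ℕ → Ω → ℝ≥0∞} {a b : ℕ}
    (hX : ∀ j ∈ Icc a b, Measurable[𝓕 j] (X j))
    (hstop : ∀ κ : Ω → ℕ, (∀ ω, κ ω ∈ Icc a b) →
      (∀ n, MeasurableSet[𝓕 n] {ω | κ ω ≤ n}) → ∫⁻ ω, X (κ ω) ω ∂Q ≤ 1)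
    (c : ℝ≥0∞) :
    Q {ω | ∃ j ∈ Icc a b, c ≤ X j ω} ≤ c⁻¹ := by
  rcases lt_or_ge b a with hba | hab
  · simp [Icc_eq_empty_of_lt hba]
  set κ := hittingBtwn X (Ici c) a b
  set E := {ω | ∃ j ∈ Icc a b, c ≤ X j ω}
  have hκ_stop : ∀ n, MeasurableSet[𝓕 n] {ω | κ ω ≤ n} := by
    intro n
    rcases le_or_gt b n with hbn | hnb
    · simp [κ, fun ω => (hittingBtwn_le (u := X) (s := Ici c) (n := a) ω).trans hbn]
    · have : {ω | κ ω ≤ n} = ⋃ j ∈ Icc a n, {ω | c ≤ X j ω} := by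
        ext ω; simp [κ, hittingBtwn_le_iff_of_lt _ hnb]
      rw [this]
      exact .biUnion (to_countable _) fun j hj =>
        𝓕.mono hj.2 _ (hX j ⟨hj.1, hj.2.trans hnb.le⟩ measurableSet_Ici)
  have hE : MeasurableSet E := by
    rw [show E = ⋃ j ∈ Icc a b, {ω | c ≤ X j ω} by ext; simp [E]]
    exact .biUnion (to_countable _) fun j hj => 𝓕.le j _ (hX j hj measurableSet_Ici)
  have hcross : E.indicator (fun _ => c) ≤ fun ω => X (κ ω) ω :=
    Set.indicator_le fun ω hω => hittingBtwn_mem_set (s := Ici c) hω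
  refine ENNReal.le_inv_iff_mul_le.mpr ?_
  calc Q E * c = ∫⁻ ω, E.indicator (fun _ => c) ω ∂Q := by
        rw [lintegral_indicator_const hE, mul_comm]
    _ ≤ ∫⁻ ω, X (κ ω) ω ∂Q := lintegral_mono hcross
    _ ≤ 1 := hstop κ (hittingBtwn_mem_Icc hab) hκ_stop

lemma coordSigma_le (s : Set ℕ) : coordSigma 𝒳 s ≤ MeasurableSpace.pi :=
  iSup₂_le fun i _ => (measurable_pi_apply i).comap_le

lemma coordSigma_mono {s s' : Set ℕ} (h : s ⊆ s') : coordSigma 𝒳 s ≤ coordSigma 𝒳 s' :=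
  biSup_mono h

lemma measurableSet_of_coordSigma {s : Set ℕ} {E : Set (ℕ → 𝒳)}
    (hE : MeasurableSet[coordSigma 𝒳 s] E) : MeasurableSet E :=
  coordSigma_le s _ hE

def cylindersOn (𝒳 : Type*) [MeasurableSpace 𝒳] (s : Set ℕ) : Set (Set (ℕ → 𝒳)) :=
  {E | ∃ u : Finset ℕ, ↑u ⊆ s ∧ ∃ A : ℕ → Set 𝒳, (∀ i, MeasurableSet (A i)) ∧
      E = {ω | ∀ i ∈ u, ω i ∈ A i}}

lemma isPiSystem_cylindersOn (s : Set ℕ) : IsPiSystem (cylindersOn 𝒳 s) := by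
  classical
  rintro _ ⟨u, hu, A, hA, rfl⟩ _ ⟨u', hu', A', hA', rfl⟩ -
  refine ⟨u ∪ u', by simpa using union_subset hu hu',
    fun i => {x | (i ∈ u → x ∈ A i) ∧ (i ∈ u' → x ∈ A' i)}, fun i => ?_, ?_⟩
  · by_cases h : i ∈ u <;> by_cases h' : i ∈ u' <;> simp [h, h', hA i, hA' i]
  · ext ω
    simp only [mem_inter_iff, mem_ofPred_eq, Finset.mem_union]
    exact ⟨fun h i hi => ⟨fun hiu => h.1 i hiu, fun hiu => h.2 i hiu⟩,
      fun h => ⟨fun i hi => (h i (.inl hi)).1 hi, fun i hi => (h i (.inr hi)).2 hi⟩⟩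

lemma coordSigma_eq_generateFrom_cylindersOn (s : Set ℕ) :
    coordSigma 𝒳 s = MeasurableSpace.generateFrom (cylindersOn 𝒳 s) := by
  classical
  apply le_antisymm
  · refine iSup₂_le fun i hi => MeasurableSpace.comap_le_iff_le_map.mpr fun B hB => ?_
    refine MeasurableSpace.measurableSet_generateFrom
      ⟨{i}, by simpa using hi, fun j => if j = i then B else univ,
        fun j => by by_cases h : j = i <;> simp [h, hB], by ext ω; simp⟩
  · refine MeasurableSpace.generateFrom_le ?_
    rintro _ ⟨u, hu, A, hA, rfl⟩
    rw [show {ω : ℕ → 𝒳 | ∀ i ∈ u, ω i ∈ A i} = ⋂ i ∈ u, (fun ω => ω i) ⁻¹' A i by ext; simp]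
    exact .biInter u.countable_toSet fun i hi =>
      le_iSup₂ (f := fun i (_ : i ∈ s) => MeasurableSpace.comap (fun ω : ℕ → 𝒳 => ω i) _)
        i (hu hi) _ ⟨A i, hA i, rfl⟩

lemma IsProductLaw.measure_eq_of_coordSigma {P P' : Measure (ℕ → 𝒳)} {ν ν' : ℕ → Measure 𝒳}
    (hP : IsProductLaw P ν) (hP' : IsProductLaw P' ν') {s : Set ℕ}
    (hs : ∀ i ∈ s, 1 ≤ i ∧ ν i = ν' i) {E : Set (ℕ → 𝒳)}
    (hE : MeasurableSet[coordSigma 𝒳 s] E) : P E = P' E := by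
  have := hP.1
  have htrim : P.trim (coordSigma_le s) = P'.trim (coordSigma_le s) := by
    have := isFiniteMeasure_trim (μ := P) (coordSigma_le s)
    refine ext_of_generate_finite _ (coordSigma_eq_generateFrom_cylindersOn s)
      (isPiSystem_cylindersOn s) ?_ ?_
    · intro C hC
      have hCm : MeasurableSet[coordSigma 𝒳 s] C := by
        rw [coordSigma_eq_generateFrom_cylindersOn]
        exact MeasurableSpace.measurableSet_generateFrom hC
      obtain ⟨u, hu, A, hA, rfl⟩ := hC
      have hu1 : ∀ i ∈ u, 1 ≤ i := fun i hi => (hs i (hu hi)).1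
      rw [trim_measurableSet_eq _ hCm, trim_measurableSet_eq _ hCm,
        hP.2 u hu1 A hA, hP'.2 u hu1 A hA]
      exact Finset.prod_congr rfl fun i hi => by rw [(hs i (hu hi)).2]
    · rw [trim_measurableSet_eq _ .univ, trim_measurableSet_eq _ .univ, measure_univ,
        hP'.1.measure_univ]
  rw [← trim_measurableSet_eq (coordSigma_le s) hE, htrim, trim_measurableSet_eq _ hE]

lemma IsProductLaw.isIIDOn {P : Measure (ℕ → 𝒳)} {ν : ℕ → Measure 𝒳} (hP : IsProductLaw P ν)
    {F : Measure 𝒳} {I : Set ℕ} (hI : ∀ i ∈ I, 1 ≤ i ∧ ν i = F) : IsIIDOn P F I :=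
  ⟨hP.1, fun s hs A hA => by
    rw [hP.2 s (fun i hi => (hI i (hs hi)).1) A hA]
    exact Finset.prod_congr rfl fun i hi => by rw [(hI i (hs hi)).2]⟩

lemma IsStoppingTimeSeq.measurableSet_ge {τ : (ℕ → 𝒳) → ℕ∞} (hτ : IsStoppingTimeSeq τ)
    {t : ℕ} (ht : 1 ≤ t) : MeasurableSet[natFilt 𝒳 (t - 1)] {ω | (t : ℕ∞) ≤ τ ω} := by
  have : {ω | (t : ℕ∞) ≤ τ ω} = {ω | τ ω ≤ ((t - 1 : ℕ) : ℕ∞)}ᶜ := by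
    ext ω
    rw [mem_compl_iff, mem_ofPred_eq, mem_ofPred_eq, not_le,
      ← ENat.add_one_le_iff (ENat.natCast_ne_top _)]
    norm_cast
    rw [Nat.sub_add_cancel ht]
  rw [this]
  exact (hτ (t - 1)).compl

def fwdFiltration (𝒳 : Type*) [MeasurableSpace 𝒳] (t : ℕ) :
    Filtration ℕ (inferInstance : MeasurableSpace (ℕ → 𝒳)) :=
  ⟨fwdFilt 𝒳 t, fun _ _ h => coordSigma_mono fun _ hi => ⟨hi.1, hi.2.trans h⟩,
    fun _ => coordSigma_le _⟩

/-- The backward filtration run forwards: its `j`-th σ-algebra is `σ(X_{t-j}, …, X_{t-1})`. -/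
def bwdFiltrationRev (𝒳 : Type*) [MeasurableSpace 𝒳] (t : ℕ) :
    Filtration ℕ (inferInstance : MeasurableSpace (ℕ → 𝒳)) :=
  ⟨fun j => bwdFilt 𝒳 t (t - j),
    fun _ _ hjk => coordSigma_mono fun _ hi => ⟨(Nat.sub_le_sub_left hjk t).trans hi.1, hi.2⟩,
    fun _ => coordSigma_le _⟩

lemma IsForwardEProcess.measure_exists_le_le_inv {𝒫₁ : Set (Measure 𝒳)} {t : ℕ}
    {R : ℕ → (ℕ → 𝒳) → ℝ≥0∞} (hR : IsForwardEProcess 𝒫₁ t R) {F₁ : Measure 𝒳}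
    (hF₁ : F₁ ∈ 𝒫₁) {Q : Measure (ℕ → 𝒳)} (hQ : IsIIDOn Q F₁ {i | t ≤ i}) (c : ℝ≥0∞) :
    Q {ω | ∃ n, t ≤ n ∧ c ≤ R n ω} ≤ c⁻¹ := by
  have hwindow : ∀ N, Q {ω | ∃ n ∈ Icc t N, c ≤ R n ω} ≤ c⁻¹ := fun N =>
    measure_exists_mem_Icc_le_inv (fwdFiltration 𝒳 t) (fun n hn => hR.1 n hn.1)
      (fun κ hκ hκs => hR.2 F₁ hF₁ Q hQ κ (fun ω => (hκ ω).1) hκs) c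
  have hunion : {ω | ∃ n, t ≤ n ∧ c ≤ R n ω} = ⋃ N, {ω | ∃ n ∈ Icc t N, c ≤ R n ω} := by
    ext ω
    simp only [mem_ofPred_eq, mem_iUnion, mem_Icc]
    exact ⟨fun ⟨n, hn, hc⟩ => ⟨n, n, ⟨hn, le_rfl⟩, hc⟩, fun ⟨_, n, hn, hc⟩ => ⟨n, hn.1, hc⟩⟩
  have hmono : Monotone fun N => {ω | ∃ n ∈ Icc t N, c ≤ R n ω} :=
    fun _ _ hNM _ ⟨n, hn, hc⟩ => ⟨n, ⟨hn.1, hn.2.trans hNM⟩, hc⟩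
  rw [hunion, hmono.measure_iUnion]
  exact iSup_le hwindow

lemma IsBackwardEProcess.measure_exists_lt_le_inv {𝒫₀ : Set (Measure 𝒳)} {t : ℕ}
    {S : ℕ → (ℕ → 𝒳) → ℝ≥0∞} (hS : IsBackwardEProcess 𝒫₀ t S) {F₀ : Measure 𝒳}
    (hF₀ : F₀ ∈ 𝒫₀) {Q : Measure (ℕ → 𝒳)} (hQ : IsIIDOn Q F₀ {i | 1 ≤ i ∧ i < t})
    (c : ℝ≥0∞) :
    Q {ω | ∃ n, 1 ≤ n ∧ n < t ∧ c ≤ S n ω} ≤ c⁻¹ := by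
  have hreindex : {ω | ∃ n, 1 ≤ n ∧ n < t ∧ c ≤ S n ω} =
      {ω | ∃ j ∈ Icc 1 (t - 1), c ≤ S (t - j) ω} := by
    ext ω
    simp only [mem_ofPred_eq, mem_Icc]
    constructor
    · rintro ⟨n, h1, h2, hc⟩
      exact ⟨t - n, ⟨by omega, by omega⟩, by rwa [Nat.sub_sub_self h2.le]⟩
    · rintro ⟨j, hj, hc⟩
      exact ⟨t - j, by omega, by omega, hc⟩
  rw [hreindex]
  refine measure_exists_mem_Icc_le_inv (bwdFiltrationRev 𝒳 t)
    (fun j hj => hS.1 (t - j) (by grind) (by grind)) (fun κ hκ hκs => ?_) c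
  refine hS.2 F₀ hF₀ Q hQ (fun ω => t - κ ω) (fun ω => by grind) fun n => ?_
  rcases Nat.eq_zero_or_pos n with rfl | hn
  · simp
  · have : {ω | n ≤ t - κ ω} = {ω | κ ω ≤ t - n} := by
      ext ω; have := hκ ω; simp only [mem_ofPred_eq, mem_Icc] at this ⊢; omega
    rw [this]
    have hle : bwdFilt 𝒳 t (t - (t - n)) ≤ bwdFilt 𝒳 t n :=
      coordSigma_mono fun i (hi : t - (t - n) ≤ i ∧ i < t) => ⟨by omega, hi.2⟩
    exact hle _ (hκs (t - n))

/-- `M_t ≥ c` forces `ω` into this set: `M_t` is `1`, a value of `R` at a time `≥ t`, or a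
value of `S` at a time in `[1, t)`. -/
def exceedanceSet (R S : ℕ → (ℕ → 𝒳) → ℝ≥0∞) (t : ℕ) (c : ℝ≥0∞) : Set (ℕ → 𝒳) :=
  {ω | c ≤ 1 ∨ (∃ n, t ≤ n ∧ c ≤ R n ω) ∨ ∃ n, 1 ≤ n ∧ n < t ∧ c ≤ S n ω}

lemma mem_exceedanceSet_of_le_eStat {𝒴 : Type*} {τ : (ℕ → 𝒴) → ℕ∞} {That : (ℕ → 𝒴) → ℕ}
    {R S : ℕ → ℕ → (ℕ → 𝒴) → ℝ≥0∞} {t : ℕ} {ω : ℕ → 𝒴} {x : ℝ}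
    (hThat : τ ω ≠ ⊤ → 1 ≤ That ω) (h : (x : EReal) ≤ eStat τ That R S t ω) :
    ω ∈ exceedanceSet (R t) (S t) t (ENNReal.ofReal x) := by
  have hofReal : ∀ y : ℝ≥0∞, (x : EReal) ≤ y → ENNReal.ofReal x ≤ y := fun y hy => by
    rw [← EReal.coe_ennreal_le_coe_ennreal_iff, EReal.coe_ennreal_ofReal]
    rcases le_total x 0 with hx | hx
    · simpa [max_eq_right hx] using EReal.coe_ennreal_nonneg y
    · rwa [max_eq_left hx]
  unfold eStat at h
  split_ifs at h with hτ hlt heq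
  · exact .inr (.inl ⟨_, by omega, hofReal _ h⟩)
  · exact .inl (ENNReal.ofReal_le_one.2 (by exact_mod_cast h))
  · exact .inr (.inr ⟨_, hThat hτ.2, by omega, hofReal _ h⟩)
  · simp at h

lemma measurableSet_exceedanceSet {Ω' : Type*} [MeasurableSpace Ω'] {R S : ℕ → (ℕ → 𝒳) → ℝ≥0∞}
    {t : ℕ} (hR : ∀ n, t ≤ n → Measurable (R n)) (hS : ∀ n, 1 ≤ n → n < t → Measurable (S n))
    {c : Ω' → ℝ≥0∞} (hc : Measurable c) :
    MeasurableSet {q : (ℕ → 𝒳) × Ω' | q.1 ∈ exceedanceSet R S t (c q.2)} := by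
  have hc' : Measurable fun q : (ℕ → 𝒳) × Ω' => c q.2 := hc.comp measurable_snd
  have hunion : {q : (ℕ → 𝒳) × Ω' | q.1 ∈ exceedanceSet R S t (c q.2)} =
      {q | c q.2 ≤ 1} ∪ ((⋃ n ∈ {n | t ≤ n}, {q | c q.2 ≤ R n q.1}) ∪
        ⋃ n ∈ {n | 1 ≤ n ∧ n < t}, {q | c q.2 ≤ S n q.1}) := by
    ext; simp [exceedanceSet, and_assoc]
  rw [hunion]
  refine (measurableSet_le hc' measurable_const).union
    ((MeasurableSet.biUnion (to_countable _) fun n hn => ?_).union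
      (MeasurableSet.biUnion (to_countable _) fun n hn => ?_))
  · exact measurableSet_le hc' ((hR n hn).comp measurable_fst)
  · exact measurableSet_le hc' ((hS n hn.1 hn.2).comp measurable_fst)

lemma measure_exceedanceSet_le {𝒫₀ 𝒫₁ : Set (Measure 𝒳)} {F₀ F₁ : Measure 𝒳} {T : ℕ}
    {P : Measure (ℕ → 𝒳)} (hP : IsChangeLaw P F₀ F₁ T) (hT : 1 ≤ T)
    {R S : ℕ → (ℕ → 𝒳) → ℝ≥0∞} (hR : IsForwardEProcess 𝒫₁ T R) (hF₁ : F₁ ∈ 𝒫₁)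
    (hS : IsBackwardEProcess 𝒫₀ T S) (hF₀ : F₀ ∈ 𝒫₀) (c : ℝ≥0∞) :
    P (exceedanceSet R S T c) ≤ 2 * c⁻¹ := by
  have := hP.1
  rcases le_or_gt c 1 with hc | hc
  · calc P (exceedanceSet R S T c) ≤ 1 := prob_le_one
      _ ≤ c⁻¹ := ENNReal.one_le_inv.2 hc
      _ ≤ 2 * c⁻¹ := le_mul_of_one_le_left' one_le_two
  have hpost : IsIIDOn P F₁ {i | T ≤ i} :=
    IsProductLaw.isIIDOn hP fun i hi => ⟨hT.trans hi, if_neg (not_lt.2 hi)⟩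
  have hpre : IsIIDOn P F₀ {i | 1 ≤ i ∧ i < T} :=
    IsProductLaw.isIIDOn hP fun i hi => ⟨hi.1, if_pos hi.2⟩
  calc P (exceedanceSet R S T c)
      ≤ P ({ω | ∃ n, T ≤ n ∧ c ≤ R n ω} ∪ {ω | ∃ n, 1 ≤ n ∧ n < T ∧ c ≤ S n ω}) :=
        measure_mono fun ω hω => hω.resolve_left hc.not_ge
    _ ≤ c⁻¹ + c⁻¹ := (measure_union_le _ _).trans (add_le_add
        (hR.measure_exists_le_le_inv hF₁ hpost c) (hS.measure_exists_lt_le_inv hF₀ hpre c))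
    _ = 2 * c⁻¹ := (two_mul _).symm

lemma measure_prod_exceedanceSet_le {𝒫₀ 𝒫₁ : Set (Measure 𝒳)} {F₀ F₁ : Measure 𝒳} {T : ℕ}
    {P : Measure (ℕ → 𝒳)} (hP : IsChangeLaw P F₀ F₁ T) (hT : 1 ≤ T)
    {R S : ℕ → (ℕ → 𝒳) → ℝ≥0∞} (hR : IsForwardEProcess 𝒫₁ T R) (hF₁ : F₁ ∈ 𝒫₁)
    (hS : IsBackwardEProcess 𝒫₀ T S) (hF₀ : F₀ ∈ 𝒫₀)
    {Ω' : Type*} [MeasurableSpace Ω'] {μ : Measure Ω'} [SFinite μ] {ρ : Ω' → ℝ}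
    (hρm : Measurable ρ) (hρpos : ∀ᵐ a ∂μ, 0 < ρ a) (hρint : Integrable ρ μ) :
    (P.prod μ) {q | q.1 ∈ exceedanceSet R S T (ENNReal.ofReal (2 / ρ q.2))} ≤
      ENNReal.ofReal (∫ a, ρ a ∂μ) := by
  have := hP.1
  refine measure_prod_le_ofReal_integral ?_ hρint (hρpos.mono fun _ ha => ha.le) ?_
  · exact measurableSet_exceedanceSet (fun n hn => (hR.1 n hn).mono (coordSigma_le _) le_rfl)
      (fun n h1 h2 => (hS.1 n h1 h2).mono (coordSigma_le _) le_rfl)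
      (ENNReal.measurable_ofReal.comp (measurable_const.div hρm))
  · filter_upwards [hρpos] with a ha
    rw [← two_mul_inv_ofReal_two_div ha]
    exact measure_exceedanceSet_le hP hT hR hF₁ hS hF₀ _

theorem known_prechange_coverage_general
    {𝒳 : Type*} [MeasurableSpace 𝒳]
    (F₀ : Measure 𝒳) (𝒫₁ : Set (Measure 𝒳))
    (τ : (ℕ → 𝒳) → ℕ∞) (hτ : IsStoppingTimeSeq τ)
    (That : (ℕ → 𝒳) → ℕ)
    (hThat : ∀ ω, τ ω ≠ ⊤ → 1 ≤ That ω ∧ (That ω : ℕ∞) ≤ τ ω)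
    (R S : ℕ → ℕ → (ℕ → 𝒳) → ℝ≥0∞)
    (hR : ∀ t : ℕ, 1 ≤ t → IsForwardEProcess 𝒫₁ t (R t))
    (hS : ∀ t : ℕ, 1 ≤ t → IsBackwardEProcess {F₀} t (S t))
    (α : ℝ) (hα : α ∈ Set.Ioo (0 : ℝ) 1)
    (T : ℕ) (hT : 1 ≤ T)
    -- the auxiliary randomization carrying the estimators `r_t`, independent of the data
    {Ωa : Type*} [MeasurableSpace Ωa] (μa : Measure Ωa) [IsProbabilityMeasure μa]
    (r : ℕ → Ωa → ℝ) (hrmeas : ∀ t, Measurable (r t))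
    (hrpos : ∀ t, ∀ᵐ a ∂μa, 0 < r t a) (hrint : ∀ t, Integrable (r t) μa)
    (Pinf : Measure (ℕ → 𝒳)) (hPinf : IsNoChangeLaw Pinf F₀)
    (hrunb : ∀ t : ℕ, ∫ a, r t a ∂μa = (Pinf {ω | (t : ℕ∞) ≤ τ ω}).toReal)
    (hpos : Pinf {ω | (T : ℕ∞) ≤ τ ω} ≠ 0)
    (F₁ : Measure 𝒳) (hF₁ : F₁ ∈ 𝒫₁)
    (P : Measure (ℕ → 𝒳)) (hP : IsChangeLaw P F₀ F₁ T) :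
    ENNReal.ofReal (1 - α) ≤
      ProbabilityTheory.cond (P.prod μa) {q : (ℕ → 𝒳) × Ωa | (T : ℕ∞) ≤ τ q.1}
        {q : (ℕ → 𝒳) × Ωa |
          T ∈ {t : ℕ | 1 ≤ t ∧ (t : ℕ∞) ≤ τ q.1 ∧
            eStat τ That R S t q.1 < ((2 / (α * r t q.2) : ℝ) : EReal)}} := by
  obtain ⟨hα0, -⟩ := hα
  have := hP.1
  have := hPinf.1
  set A := {ω : ℕ → 𝒳 | (T : ℕ∞) ≤ τ ω}
  have hA : (P.prod μa) (Prod.fst ⁻¹' A) = Pinf A := by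
    rw [← Set.prod_univ, Measure.prod_prod, measure_univ, mul_one]
    exact IsProductLaw.measure_eq_of_coordSigma hP hPinf
      (fun i (hi : 1 ≤ i ∧ i ≤ T - 1) => ⟨hi.1, if_pos (by omega)⟩) (hτ.measurableSet_ge hT)
  have hnotcov : Prod.fst ⁻¹' A \ {q | T ∈ {t : ℕ | 1 ≤ t ∧
      (t : ℕ∞) ≤ τ q.1 ∧ eStat τ That R S t q.1 < ((2 / (α * r t q.2) : ℝ) : EReal)}} ⊆
      {q | q.1 ∈ exceedanceSet (R T) (S T) T (ENNReal.ofReal (2 / (α * r T q.2)))} :=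
    fun q ⟨hq, hnot⟩ => mem_exceedanceSet_of_le_eStat (fun h => (hThat q.1 h).1)
      (not_lt.1 fun h => hnot ⟨hT, hq, h⟩)
  have hG := measure_prod_exceedanceSet_le hP hT (hR T hT) hF₁ (hS T hT) rfl (μ := μa)
    ((hrmeas T).const_mul α) ((hrpos T).mono fun _ h => mul_pos hα0 h) ((hrint T).const_mul α)
  rw [integral_const_mul, ENNReal.ofReal_mul hα0.le, hrunb,
    ENNReal.ofReal_toReal (measure_ne_top _ _)] at hG
  rw [ENNReal.ofReal_sub _ hα0.le, ENNReal.ofReal_one]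
  refine le_cond_of_measure_diff_le (s := Prod.fst ⁻¹' A)
    ((measurableSet_of_coordSigma (hτ.measurableSet_ge hT)).preimage measurable_fst)
    (hA ▸ hpos) (hA ▸ measure_ne_top _ _) ?_
  rw [hA]
  exact (measure_mono hnotcov).trans hG

/-- Known pre-change coverage guarantee: if the pre-change distribution
`F₀` is known, then for every `α ∈ (0,1)`, `T ∈ ℕ`, post-change class `𝒫₁`, and stopping
time `τ` with `P_{F₀,∞}(τ ≥ T) > 0`, the confidence set
`C = {t ≤ τ : M_t < 2/(α r_t)}` built from any data-independent, a.s. strictly positive,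
unbiased estimators `r_t` of `P_{F₀,∞}(τ ≥ t)` satisfies
`P_{F₀,T,F₁}(T ∈ C | τ ≥ T) ≥ 1 − α` for every `F₁ ∈ 𝒫₁`. -/
theorem known_prechange_coverage
    {𝒳 : Type*} [MeasurableSpace 𝒳]
    (F₀ : Measure 𝒳) (𝒫₁ : Set (Measure 𝒳)) (hF₀ : F₀ ∉ 𝒫₁)
    (τ : (ℕ → 𝒳) → ℕ∞) (hτ : IsStoppingTimeSeq τ)
    (That : (ℕ → 𝒳) → ℕ) (hThatMeas : Measurable That)
    (hThat : ∀ ω, τ ω ≠ ⊤ → 1 ≤ That ω ∧ (That ω : ℕ∞) ≤ τ ω)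
    (R S : ℕ → ℕ → (ℕ → 𝒳) → ℝ≥0∞)
    (hR : ∀ t : ℕ, 1 ≤ t → IsForwardEProcess 𝒫₁ t (R t))
    (hS : ∀ t : ℕ, 1 ≤ t → IsBackwardEProcess {F₀} t (S t))
    (α : ℝ) (hα : α ∈ Set.Ioo (0 : ℝ) 1)
    (T : ℕ) (hT : 1 ≤ T)
    -- the auxiliary randomization carrying the estimators `r_t`, independent of the data
    {Ωa : Type*} [MeasurableSpace Ωa] (μa : Measure Ωa) [IsProbabilityMeasure μa]
    (r : ℕ → Ωa → ℝ) (hrmeas : ∀ t, Measurable (r t))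
    (hrpos : ∀ t, ∀ᵐ a ∂μa, 0 < r t a) (hrint : ∀ t, Integrable (r t) μa)
    (Pinf : Measure (ℕ → 𝒳)) (hPinf : IsNoChangeLaw Pinf F₀)
    (hrunb : ∀ t : ℕ, ∫ a, r t a ∂μa = (Pinf {ω | (t : ℕ∞) ≤ τ ω}).toReal)
    (hpos : Pinf {ω | (T : ℕ∞) ≤ τ ω} ≠ 0)
    (F₁ : Measure 𝒳) (hF₁ : F₁ ∈ 𝒫₁)
    (P : Measure (ℕ → 𝒳)) (hP : IsChangeLaw P F₀ F₁ T) :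
    ENNReal.ofReal (1 - α) ≤
      ProbabilityTheory.cond (P.prod μa) {q : (ℕ → 𝒳) × Ωa | (T : ℕ∞) ≤ τ q.1}
        {q : (ℕ → 𝒳) × Ωa |
          T ∈ {t : ℕ | 1 ≤ t ∧ (t : ℕ∞) ≤ τ q.1 ∧
            eStat τ That R S t q.1 < ((2 / (α * r t q.2) : ℝ) : EReal)}} :=
  known_prechange_coverage_general F₀ 𝒫₁ τ hτ That hThat R S hR hS α hα T hT μa r hrmeas hrpos hrint
    Pinf hPinf hrunb hpos F₁ hF₁ P hP

end SeqChange
end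

section
/- Adaptive confidence set for parametric pre- and post-change classes: let C₁ := {t ∈ ℕ : t ≤ τ, M_t ≤ sup_{(θ,θ′)∈𝒮_{t−1}×𝒮′_{τ−t+1}} Quantile(1 − α r_t*; M_t, M_{t,L}¹(θ,θ′),…,M_{t,L}^B(θ,θ′))} for some α, β, γ ∈ (0,1), N, B ∈ ℕ, L ∈ ℕ ∪ {∞}, where 𝒮_{t−1} := CI(X₁,…,X_{t−1}; 1 − γ r_t*) and 𝒮′_{τ−t+1} := CS(X_t,…,X_τ; 1 − β r_t*). Then for any θ₀ ∈ Θ₀, θ₁ ∈ Θ₁, and any detection stopping time τ satisfying Assumption 1 and P_{θ₀,∞}(τ ≥ T) > 0, P_{θ₀,T,θ₁}(T ∈ C₁ | τ ≥ T) ≥ 1 − α − β − γ. -/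
open MeasureTheory ProbabilityTheory Filter Set
open scoped ENNReal NNReal

namespace SeqChange

variable {𝒳 : Type*} [MeasurableSpace 𝒳]

/-- `Quantile(1 − c; v)`: the `⌈(1 − c)·|v|⌉`-th smallest of the values in `v`. -/
noncomputable def quantileStat (c : ℝ) (v : Multiset EReal) : EReal :=
  (v.sort (· ≤ ·)).getD (⌈(1 - c) * (v.card : ℝ)⌉₊ - 1) ⊥

/-- Membership in the stopped confidence sequence `CS(X_t, …, X_τ; 1 − c)`:
`θ ∈ CS(X_t,…,X_n; 1−c)` whenever `τ = n` (vacuously true when `τ = ∞`). -/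
def stoppedCSMem {𝒳 : Type*} [MeasurableSpace 𝒳] {Θ : Type*} (τ : (ℕ → 𝒳) → ℕ∞)
    (CSset : ℝ → ℕ → ℕ → (ℕ → 𝒳) → Set Θ) (c : ℝ) (t : ℕ) (ω : ℕ → 𝒳) (θ : Θ) : Prop :=
  ∀ n : ℕ, t ≤ n → τ ω = (n : ℕ∞) → θ ∈ CSset c t n ω

/-- The `(B+1)`-tuple `(M_t, M_{t,∞}¹, …, M_{t,∞}^B)` viewed as functions on the product
of the data space and the simulation space. -/
def simTuple {𝒳 Ωs : Type*} (B : ℕ) (M : (ℕ → 𝒳) → EReal) (Minf : Fin B → Ωs → EReal) :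
    Fin (B + 1) → ((ℕ → 𝒳) × Ωs) → EReal :=
  Fin.cases (fun q => M q.1) (fun j q => Minf j q.2)

/-!
Given `τ ≥ T`, the set `C₁` misses `T` only if the confidence interval misses `θ₀`, the
confidence sequence misses `θ₁`, or `M_T` exceeds the `(1 - α r)`-quantile of the simulated
statistics (truncation at `L` only raises that quantile). Conditionally on `r = r_T*` these
events have probabilities at most `γ r`, `β r` and `α r`. For the last: exceeding the quantile
means that `M_T` strictly exceeds at least `k = ⌈(1 - α r)(B + 1)⌉` of the values; by
exchangeability of the i.i.d. tuple `(M_T, M¹_{T,∞}, …, M^B_{T,∞})` every entry does so with the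
same probability, while at most `B + 1 - k` entries can do so at once. Averaging over `r` bounds
the failure probability by `(α + β + γ) E[r_T*] = (α + β + γ) P_{θ₀*,∞}(τ ≥ T)`; by Assumption 1
this is at most `(α + β + γ) P_{θ₀,∞}(τ ≥ T)`, and `P_{θ₀,∞}(τ ≥ T) = P_{θ₀,T,θ₁}(τ ≥ T)`
because `{τ ≥ T}` depends only on the pre-change observations.
-/

lemma getElem_iff_lt_countP_of_pairwise {α : Type*} [Preorder α] {l : List α}
    (hl : l.Pairwise (· ≤ ·)) {p : α → Bool} (hp : ∀ a b, a ≤ b → p b → p a)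
    {m : ℕ} (hm : m < l.length) : p l[m] ↔ m < l.countP p := by
  induction l generalizing m with
  | nil => simp at hm
  | cons a l ih =>
    obtain ⟨hal, hl⟩ := List.pairwise_cons.mp hl
    by_cases ha : p a
    · cases m with
      | zero => simp [ha]
      | succ m => simp [ha, ih hl (by simpa using hm)]
    · have hfalse : ∀ b ∈ a :: l, ¬ p b := by
        rintro b (_ | ⟨_, hb⟩) hpb
        exacts [ha hpb, ha (hp a b (hal b hb) hpb)]
      simp only [List.countP_eq_zero.mpr hfalse, Nat.not_lt_zero, iff_false]
      exact hfalse _ (List.getElem_mem hm)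

lemma sort_getD_iff_lt_countP {α : Type*} [LinearOrder α] {v : Multiset α} {p : α → Prop}
    [DecidablePred p] (hp : ∀ a b, a ≤ b → p b → p a) {m : ℕ} (hm : m < Multiset.card v)
    (d : α) : p ((v.sort (· ≤ ·)).getD m d) ↔ m < v.countP p := by
  have hm' : m < (v.sort (· ≤ ·)).length := by rwa [Multiset.length_sort]
  have key := getElem_iff_lt_countP_of_pairwise (Multiset.pairwise_sort v (· ≤ ·))
    (p := fun a => decide (p a)) (by simpa using hp) hm'
  rw [List.getD_eq_getElem _ _ hm', ← Multiset.coe_countP, Multiset.sort_eq] at *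
  simpa using key

lemma quantileStat_lt_iff {v : Multiset EReal} {c : ℝ} (hc : 0 ≤ c) (hc1 : c < 1)
    (hv : 0 < Multiset.card v) (t : EReal) :
    quantileStat c v < t ↔ ⌈(1 - c) * (Multiset.card v : ℝ)⌉₊ ≤ v.countP (· < t) := by
  have hk : 0 < ⌈(1 - c) * (Multiset.card v : ℝ)⌉₊ :=
    Nat.ceil_pos.mpr (mul_pos (by linarith) (by exact_mod_cast hv))
  have hkv : ⌈(1 - c) * (Multiset.card v : ℝ)⌉₊ ≤ Multiset.card v :=
    Nat.ceil_le.mpr (mul_le_of_le_one_left (Nat.cast_nonneg _) (by linarith))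
  rw [quantileStat, sort_getD_iff_lt_countP (fun a b hab hb => hab.trans_lt hb) (by omega)]
  omega

lemma countP_le_countP_of_rel {v w : Multiset EReal} (h : Multiset.Rel (· ≤ ·) v w) (t : EReal) :
    w.countP (· ≤ t) ≤ v.countP (· ≤ t) := by
  induction h with
  | zero => simp
  | cons hab _ ih =>
    simp only [Multiset.countP_cons]
    gcongr
    split_ifs <;> simp_all [hab.trans]

lemma quantileStat_mono {v w : Multiset EReal} (h : Multiset.Rel (· ≤ ·) v w) (c : ℝ) :
    quantileStat c v ≤ quantileStat c w := by
  have hcard : Multiset.card v = Multiset.card w := Multiset.card_eq_card_of_rel h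
  rw [quantileStat, quantileStat, hcard]
  set m := ⌈(1 - c) * (Multiset.card w : ℝ)⌉₊ - 1
  by_cases hm : m < Multiset.card w
  · set t := (w.sort (· ≤ ·)).getD m ⊥
    have hw : m < w.countP (· ≤ t) :=
      (sort_getD_iff_lt_countP (fun a b hab hb => hab.trans hb) hm ⊥).mp le_rfl
    exact (sort_getD_iff_lt_countP (fun a b hab hb => hab.trans hb) (hcard ▸ hm) ⊥).mpr
      (hw.trans_le (countP_le_countP_of_rel h t))
  · rw [List.getD_eq_default _ _ (by simp [hcard]; omega),
      List.getD_eq_default _ _ (by simp; omega)]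

lemma countP_map_univ_eq_sum {ι : Type*} [Fintype ι] (y : ι → EReal) (p : EReal → Prop)
    [DecidablePred p] :
    (Finset.univ.val.map y).countP p = ∑ j, if p (y j) then 1 else 0 := by
  rw [Multiset.countP_map, ← Finset.card_filter]; rfl

lemma measurable_quantileStat {ι : Type*} [Fintype ι] :
    Measurable fun q : ℝ × (ι → EReal) => quantileStat q.1 (Finset.univ.val.map q.2) := by
  classical
  have hcard (y : ι → EReal) : Multiset.card (Finset.univ.val.map y) = Fintype.card ι := by simp
  have hsorted (m : ℕ) : Measurable fun y : ι → EReal =>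
      ((Finset.univ.val.map y).sort (· ≤ ·)).getD m ⊥ := by
    by_cases hm : m < Fintype.card ι
    · refine measurable_of_Iic fun t => ?_
      have hset : (fun y : ι → EReal => ((Finset.univ.val.map y).sort (· ≤ ·)).getD m ⊥) ⁻¹'
          Iic t = {y | m < ∑ j, if y j ≤ t then 1 else 0} := by
        ext y
        rw [mem_preimage, mem_Iic, sort_getD_iff_lt_countP (fun a b hab hb => hab.trans hb)
          (by rwa [hcard]), countP_map_univ_eq_sum]
        rfl
      rw [hset]
      exact measurableSet_lt measurable_const <| Finset.measurable_sum _ fun j _ =>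
        Measurable.ite (measurableSet_le (measurable_pi_apply j) measurable_const)
          measurable_const measurable_const
    · have hbot : (fun y : ι → EReal => ((Finset.univ.val.map y).sort (· ≤ ·)).getD m ⊥) =
          fun _ => ⊥ := by
        ext y; exact List.getD_eq_default _ _ (by simp; omega)
      rw [hbot]; exact measurable_const
  have hidx : Measurable fun c : ℝ => ⌈(1 - c) * (Fintype.card ι : ℝ)⌉₊ - 1 :=
    (measurable_from_top (f := fun k : ℕ => k - 1)).comp
      (measurable_const.sub measurable_id |>.mul_const _).nat_ceil
  have hjoint : Measurable fun p : ℕ × (ι → EReal) =>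
      ((Finset.univ.val.map p.2).sort (· ≤ ·)).getD p.1 ⊥ :=
    measurable_from_prod_countable_right hsorted
  simp only [quantileStat, hcard]
  exact hjoint.comp ((hidx.comp measurable_fst).prodMk measurable_snd)

lemma card_filter_many_below_le {ι α : Type*} [Fintype ι] [LinearOrder α] (y : ι → α) (k : ℕ) :
    (Finset.univ.filter fun i => k ≤ (Finset.univ.filter fun j => y j < y i).card).card ≤
      Fintype.card ι - k := by
  classical
  set S := Finset.univ.filter fun i => k ≤ (Finset.univ.filter fun j => y j < y i).card
  rcases S.eq_empty_or_nonempty with hS | hS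
  · simp [hS]
  -- the values below a minimiser of `y` on `S` lie outside `S`, and there are at least `k`
  obtain ⟨i₀, hi₀, hmin⟩ := S.exists_min_image y hS
  have hbelow : (Finset.univ.filter fun j => y j < y i₀) ⊆ Sᶜ := fun j hj =>
    Finset.mem_compl.mpr fun hjS => (hmin j hjS).not_gt (Finset.mem_filter.mp hj).2
  have := (Finset.mem_filter.mp hi₀).2.trans (Finset.card_le_card hbelow)
  rw [Finset.card_compl] at this
  have := Finset.card_le_univ S
  omega

lemma measurePreserving_comp_perm_pi {ι α : Type*} [Fintype ι] [MeasurableSpace α]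
    (m : Measure α) [SigmaFinite m] (e : Equiv.Perm ι) :
    MeasurePreserving (fun y : ι → α => y ∘ e) (Measure.pi fun _ => m)
      (Measure.pi fun _ => m) := by
  convert measurePreserving_piCongrLeft (fun _ : ι => m) e.symm using 1
  ext y i
  simpa [MeasurableEquiv.coe_piCongrLeft] using
    (Equiv.piCongrLeft_apply_apply (fun _ => α) e.symm y (e i)).symm

lemma measure_quantileStat_lt_le_of_perm_invariant {ι : Type*} [Fintype ι] [DecidableEq ι]
    (ν : Measure (ι → EReal)) [IsProbabilityMeasure ν]
    (hν : ∀ e : Equiv.Perm ι, MeasurePreserving (fun y => y ∘ e) ν ν) (i₀ : ι) {c : ℝ}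
    (hc : 0 < c) :
    ν {y | quantileStat c (Finset.univ.val.map y) < y i₀} ≤ ENNReal.ofReal c := by
  rcases le_or_gt 1 c with hc1 | hc1
  · exact prob_le_one.trans (by simpa using hc1)
  set n := Fintype.card ι
  set k := ⌈(1 - c) * (n : ℝ)⌉₊
  set A : ι → Set (ι → EReal) := fun i => {y | k ≤ (Finset.univ.filter fun j => y j < y i).card}
  have hA (i : ι) : {y | quantileStat c (Finset.univ.val.map y) < y i} = A i := by
    ext y
    have hcard : Multiset.card (Finset.univ.val.map y) = n := by simp [n]
    have hn : 0 < Multiset.card (Finset.univ.val.map y) := hcard ▸ Fintype.card_pos_iff.mpr ⟨i₀⟩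
    simp only [mem_ofPred_eq, A, quantileStat_lt_iff hc.le hc1 hn, hcard, Multiset.countP_map,
      ← Finset.filter_val, Finset.card_val]
    rfl
  have hAmeas (i : ι) : MeasurableSet (A i) := by
    rw [← hA]
    exact measurableSet_lt (measurable_quantileStat.comp (measurable_const.prodMk measurable_id))
      (measurable_pi_apply i)
  have hsame (i : ι) : ν (A i) = ν (A i₀) := by
    have hpre : (fun y => y ∘ Equiv.swap i₀ i) ⁻¹' A i₀ = A i := by
      ext y
      simp only [← hA, mem_preimage, mem_ofPred_eq]
      rw [← Multiset.map_map, Multiset.map_univ_val_equiv, Function.comp_apply,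
        Equiv.swap_apply_left]
    rw [← hpre, (hν _).measure_preimage (hAmeas i₀).nullMeasurableSet]
  have hsum : ∑ i, ν (A i) ≤ ((n - k : ℕ) : ℝ≥0∞) := by
    calc ∑ i, ν (A i) = ∫⁻ y, ∑ i, (A i).indicator 1 y ∂ν := by
          rw [lintegral_finsetSum _ fun i _ => measurable_one.indicator (hAmeas i)]
          simp only [lintegral_indicator_one (hAmeas _)]
      _ ≤ ∫⁻ _, ((n - k : ℕ) : ℝ≥0∞) ∂ν := lintegral_mono fun y => by
          simp only [Set.indicator_apply, Pi.one_apply, Finset.sum_boole]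
          exact_mod_cast card_filter_many_below_le y k
      _ = ((n - k : ℕ) : ℝ≥0∞) := by simp
  have hk : (n : ℝ) - c * n ≤ k := by linarith [Nat.le_ceil ((1 - c) * (n : ℝ))]
  have hnk : ((n - k : ℕ) : ℝ≥0∞) ≤ n * ENNReal.ofReal c := by
    rw [← ENNReal.ofReal_natCast, ← ENNReal.ofReal_natCast n, ← ENNReal.ofReal_mul (by positivity)]
    refine ENNReal.ofReal_le_ofReal ?_
    rcases le_total k n with hkn | hkn
    · rw [Nat.cast_sub hkn]; linarith
    · rw [Nat.sub_eq_zero_of_le hkn, Nat.cast_zero]; positivity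
  have hn0 : (n : ℝ≥0∞) ≠ 0 := by simpa [n] using (Fintype.card_pos_iff.mpr ⟨i₀⟩).ne'
  rw [hA, ← ENNReal.mul_le_mul_iff_right hn0 (ENNReal.natCast_ne_top n)]
  calc (n : ℝ≥0∞) * ν (A i₀) = ∑ i, ν (A i) := by simp [hsame, n]
    _ ≤ n * ENNReal.ofReal c := hsum.trans hnk

lemma measure_quantileStat_lt_le_of_iIndepFun {Ω ι : Type*} [MeasurableSpace Ω] [Fintype ι]
    [DecidableEq ι] {μ : Measure Ω} [IsProbabilityMeasure μ] {W : ι → Ω → EReal} {i₀ : ι}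
    (hind : iIndepFun W μ) (hid : ∀ i, IdentDistrib (W i) (W i₀) μ μ) {c : ℝ} (hc : 0 < c) :
    μ {ω | quantileStat c (Finset.univ.val.map (W · ω)) < W i₀ ω} ≤ ENNReal.ofReal c := by
  have hae (i : ι) : AEMeasurable (W i) μ := (hid i).aemeasurable_fst
  have hlaw : μ.map (fun ω i => W i ω) = Measure.pi fun _ => μ.map (W i₀) := by
    rw [(iIndepFun_iff_map_fun_eq_pi_map hae).mp hind]
    exact congrArg Measure.pi (funext fun i => (hid i).map_eq)
  have hS : MeasurableSet {y : ι → EReal | quantileStat c (Finset.univ.val.map y) < y i₀} :=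
    measurableSet_lt (measurable_quantileStat.comp (measurable_const.prodMk measurable_id))
      (measurable_pi_apply i₀)
  have := Measure.isProbabilityMeasure_map (hae i₀)
  calc μ {ω | quantileStat c (Finset.univ.val.map (W · ω)) < W i₀ ω}
      = μ.map (fun ω i => W i ω) {y | quantileStat c (Finset.univ.val.map y) < y i₀} :=
        (Measure.map_apply_of_aemeasurable (aemeasurable_pi_lambda _ hae) hS).symm
    _ ≤ ENNReal.ofReal c := by
        rw [hlaw]
        exact measure_quantileStat_lt_le_of_perm_invariant _
          (measurePreserving_comp_perm_pi _) i₀ hc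

lemma measure_compl_le_of_coverage {Ω : Type*} [MeasurableSpace Ω] {μ : Measure Ω}
    [IsProbabilityMeasure μ] {S : ℝ → Set Ω} (hS : ∀ c, MeasurableSet (S c))
    (hcov : ∀ c ∈ Ioo (0 : ℝ) 1, ENNReal.ofReal (1 - c) ≤ μ (S c)) {c : ℝ} (hc : 0 < c) :
    μ (S c)ᶜ ≤ ENNReal.ofReal c := by
  rcases lt_or_ge c 1 with hc1 | hc1
  · rw [prob_compl_eq_one_sub (hS c)]
    calc 1 - μ (S c) ≤ 1 - ENNReal.ofReal (1 - c) := tsub_le_tsub_left (hcov c ⟨hc, hc1⟩) 1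
      _ = ENNReal.ofReal c := by
        rw [← ENNReal.ofReal_one, ← ENNReal.ofReal_sub _ (by linarith), sub_sub_cancel]
  · exact prob_le_one.trans (by simpa using hc1)

section RandomLevel

variable {X Ω' Y : Type*} [MeasurableSpace X] [MeasurableSpace Ω'] [MeasurableSpace Y]
  {r : Y → ℝ} {a : ℝ}

lemma measure_prod_randomLevel_le (μ : Measure X) [SFinite μ] (ν : Measure Y) [SFinite ν]
    (E : ℝ → Set X) (ha : 0 < a)
    (hE : NullMeasurableSet {p : X × Y | p.1 ∈ E (a * r p.2)} (μ.prod ν))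
    (hbound : ∀ c, 0 < c → μ (E c) ≤ ENNReal.ofReal c) (hrpos : ∀ᵐ y ∂ν, 0 < r y)
    (hrint : Integrable r ν) :
    (μ.prod ν) {p | p.1 ∈ E (a * r p.2)} ≤ ENNReal.ofReal a * ENNReal.ofReal (∫ y, r y ∂ν) := by
  calc (μ.prod ν) {p | p.1 ∈ E (a * r p.2)}
      = ∫⁻ y, ∫⁻ x, {p : X × Y | p.1 ∈ E (a * r p.2)}.indicator 1 (x, y) ∂μ ∂ν := by
        rw [← lintegral_indicator_one₀ hE]
        exact lintegral_prod_symm _ (aemeasurable_one.indicator₀ hE)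
    _ ≤ ∫⁻ y, ENNReal.ofReal (a * r y) ∂ν := by
        refine lintegral_mono_ae (hrpos.mono fun y hy => ?_)
        exact (lintegral_indicator_one_le (E (a * r y))).trans (hbound _ (mul_pos ha hy))
    _ = ENNReal.ofReal a * ENNReal.ofReal (∫ y, r y ∂ν) := by
        rw [← ofReal_integral_eq_lintegral_ofReal (hrint.const_mul a)
          (hrpos.mono fun y hy => (mul_pos ha hy).le), integral_const_mul,
          ENNReal.ofReal_mul ha.le]

lemma measure_prod_noncoverage_le (P : Measure X) [IsProbabilityMeasure P] (μ' : Measure Ω')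
    [IsProbabilityMeasure μ'] (ν : Measure Y) [SFinite ν] {S : ℝ → Set X}
    (hS : MeasurableSet {q : X × ℝ | q.1 ∈ S q.2})
    (hcov : ∀ c ∈ Ioo (0 : ℝ) 1, ENNReal.ofReal (1 - c) ≤ P (S c)) (hr : Measurable r)
    (hrpos : ∀ᵐ y ∂ν, 0 < r y) (hrint : Integrable r ν) (ha : 0 < a) :
    ((P.prod μ').prod ν) {p | p.1.1 ∉ S (a * r p.2)} ≤
      ENNReal.ofReal a * ENNReal.ofReal (∫ y, r y ∂ν) := by
  have hSc (c : ℝ) : MeasurableSet (S c) := measurable_prodMk_right hS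
  refine measure_prod_randomLevel_le (P.prod μ') ν (fun c => Prod.fst ⁻¹' (S c)ᶜ) ha ?_
    (fun c hc => ?_) hrpos hrint
  · exact (((measurable_fst.comp measurable_fst).prodMk
      (hr.comp measurable_snd |>.const_mul a)) hS).compl.nullMeasurableSet
  · rw [← Set.prod_univ, Measure.prod_prod, measure_univ, mul_one]
    exact measure_compl_le_of_coverage hSc hcov hc

lemma measure_prod_quantileStat_lt_le {ι : Type*} [Fintype ι] [DecidableEq ι]
    (μ : Measure X) [IsProbabilityMeasure μ] (ν : Measure Y) [SFinite ν] {W : ι → X → EReal}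
    {i₀ : ι} (hind : iIndepFun W μ) (hid : ∀ i, IdentDistrib (W i) (W i₀) μ μ)
    (hr : Measurable r) (hrpos : ∀ᵐ y ∂ν, 0 < r y) (hrint : Integrable r ν) (ha : 0 < a) :
    (μ.prod ν) {p | quantileStat (a * r p.2) (Finset.univ.val.map (W · p.1)) < W i₀ p.1} ≤
      ENNReal.ofReal a * ENNReal.ofReal (∫ y, r y ∂ν) := by
  refine measure_prod_randomLevel_le μ ν
    (fun c => {x | quantileStat c (Finset.univ.val.map (W · x)) < W i₀ x}) ha ?_
    (fun c hc => measure_quantileStat_lt_le_of_iIndepFun hind hid hc) hrpos hrint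
  have hW : AEMeasurable (fun p : X × Y => (a * r p.2, fun i => W i p.1)) (μ.prod ν) :=
    (hr.comp measurable_snd |>.const_mul a).aemeasurable.prodMk
      (aemeasurable_pi_lambda _ fun i => ((hid i).aemeasurable_fst).comp_fst)
  exact hW.nullMeasurable (measurableSet_lt measurable_quantileStat
    ((measurable_pi_apply i₀).comp measurable_snd))

lemma measure_prod_miscoverage_le {ι : Type*} [Fintype ι] [DecidableEq ι] (P : Measure X)
    [IsProbabilityMeasure P] (μ' : Measure Ω') [IsProbabilityMeasure μ'] (ν : Measure Y)
    [SFinite ν] {S₁ S₂ : ℝ → Set X} (hS₁ : MeasurableSet {q : X × ℝ | q.1 ∈ S₁ q.2})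
    (hS₂ : MeasurableSet {q : X × ℝ | q.1 ∈ S₂ q.2})
    (hcov₁ : ∀ c ∈ Ioo (0 : ℝ) 1, ENNReal.ofReal (1 - c) ≤ P (S₁ c))
    (hcov₂ : ∀ c ∈ Ioo (0 : ℝ) 1, ENNReal.ofReal (1 - c) ≤ P (S₂ c))
    {W : ι → X × Ω' → EReal} {i₀ : ι} (hind : iIndepFun W (P.prod μ'))
    (hid : ∀ i, IdentDistrib (W i) (W i₀) (P.prod μ') (P.prod μ')) (hr : Measurable r)
    (hrpos : ∀ᵐ y ∂ν, 0 < r y) (hrint : Integrable r ν) {α β γ : ℝ} (hα : 0 < α) (hβ : 0 < β)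
    (hγ : 0 < γ) :
    ((P.prod μ').prod ν) ({p | p.1.1 ∉ S₁ (γ * r p.2)} ∪ {p | p.1.1 ∉ S₂ (β * r p.2)} ∪
      {p | quantileStat (α * r p.2) (Finset.univ.val.map (W · p.1)) < W i₀ p.1}) ≤
      ENNReal.ofReal (α + β + γ) * ENNReal.ofReal (∫ y, r y ∂ν) := by
  calc _ ≤ _ + _ + _ := (measure_union_le _ _).trans (add_le_add (measure_union_le _ _) le_rfl)
    _ ≤ _ := add_le_add (add_le_add
          (measure_prod_noncoverage_le P μ' ν hS₁ hcov₁ hr hrpos hrint hγ)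
          (measure_prod_noncoverage_le P μ' ν hS₂ hcov₂ hr hrpos hrint hβ))
        (measure_prod_quantileStat_lt_le _ ν hind hid hr hrpos hrint hα)
    _ = _ := by
      rw [← add_mul, ← add_mul, ← ENNReal.ofReal_add hγ.le hβ.le,
        ← ENNReal.ofReal_add (by positivity) hα.le, add_comm (γ + β), add_assoc, add_comm γ]

end RandomLevel

lemma ofReal_one_sub_le_cond {Ω : Type*} [MeasurableSpace Ω] {μ : Measure Ω}
    {C A : Set Ω} (hC : MeasurableSet C) (hC0 : μ C ≠ 0) (hCtop : μ C ≠ ⊤) {ε : ℝ} (hε : 0 ≤ ε)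
    (h : μ (C \ A) ≤ ENNReal.ofReal ε * μ C) : ENNReal.ofReal (1 - ε) ≤ μ[A|C] := by
  rw [ENNReal.ofReal_sub _ hε, ENNReal.ofReal_one, cond_apply hC, ← ENNReal.div_eq_inv_mul,
    ENNReal.le_div_iff_mul_le (Or.inl hC0) (Or.inl hCtop), ENNReal.sub_mul fun _ _ => hCtop,
    one_mul, tsub_le_iff_right]
  exact (measure_le_inter_add_sdiff μ C A).trans (add_le_add_right h _)

lemma coordSigma_le_s10 (I : Set ℕ) : coordSigma 𝒳 I ≤ (inferInstance : MeasurableSpace (ℕ → 𝒳)) :=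
  iSup₂_le fun i _ => (measurable_pi_apply i).comap_le

lemma IsProductLaw.measure_biInter_preimage {P : Measure (ℕ → 𝒳)} {ν : ℕ → Measure 𝒳}
    (hP : IsProductLaw P ν) {s : Finset ℕ} (hs : ∀ i ∈ s, 1 ≤ i) {A : ℕ → Set 𝒳}
    (hA : ∀ i ∈ s, MeasurableSet (A i)) :
    P (⋂ i ∈ s, (fun ω : ℕ → 𝒳 => ω i) ⁻¹' A i) = ∏ i ∈ s, ν i (A i) := by
  classical
  convert hP.2 s hs (fun i => if i ∈ s then A i else univ)
    (fun i => by split_ifs with h; exacts [hA i h, .univ]) using 1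
  · congr 1; ext ω; simp +contextual
  · exact Finset.prod_congr rfl fun i hi => by simp [hi]

lemma IsProductLaw.measure_eq_of_natFilt {P P' : Measure (ℕ → 𝒳)} {ν ν' : ℕ → Measure 𝒳}
    (hP : IsProductLaw P ν) (hP' : IsProductLaw P' ν') {n : ℕ}
    (hνν' : ∀ i, 1 ≤ i → i ≤ n → ν i = ν' i) {S : Set (ℕ → 𝒳)}
    (hS : MeasurableSet[natFilt 𝒳 n] S) : P S = P' S := by
  have := hP.1
  refine ext_on_measurableSpace_of_generate_finite _ _ ?_ (coordSigma_le_s10 _)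
    (generateFrom_piiUnionInter_measurableSet _ _).symm
    (isPiSystem_piiUnionInter _ (fun i => @MeasurableSpace.isPiSystem_measurableSet _
      (MeasurableSpace.comap (fun ω : ℕ → 𝒳 => ω i) inferInstance)) _)
    (by rw [hP.1.measure_univ, hP'.1.measure_univ]) hS
  rintro _ ⟨s, hs, f, hf, rfl⟩
  choose! A hA hAf using fun i hi => MeasurableSpace.measurableSet_comap.mp (hf i hi)
  have hfA : ⋂ i ∈ s, f i = ⋂ i ∈ s, (fun ω : ℕ → 𝒳 => ω i) ⁻¹' A i :=
    iInter₂_congr fun i hi => (hAf i hi).symm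
  rw [hfA, hP.measure_biInter_preimage (fun i hi => (hs hi).1) hA,
    hP'.measure_biInter_preimage (fun i hi => (hs hi).1) hA]
  exact Finset.prod_congr rfl fun i hi => by rw [hνν' i (hs hi).1 (hs hi).2]

lemma IsStoppingTimeSeq.measurableSet_natFilt_le {τ : (ℕ → 𝒳) → ℕ∞}
    (hτ : IsStoppingTimeSeq τ) {T : ℕ} (hT : 1 ≤ T) :
    MeasurableSet[natFilt 𝒳 (T - 1)] {ω | (T : ℕ∞) ≤ τ ω} := by
  obtain ⟨n, rfl⟩ := Nat.exists_eq_add_of_le' hT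
  have hset : {ω | ((n + 1 : ℕ) : ℕ∞) ≤ τ ω} = {ω | τ ω ≤ n}ᶜ := by
    ext ω
    simp [ENat.add_one_le_iff (ENat.natCast_ne_top n)]
  rw [Nat.add_sub_cancel, hset]
  exact (hτ n).compl

lemma IsChangeLaw.measure_le_stoppingTime_eq {P P₀ : Measure (ℕ → 𝒳)} {F₀ F₁ : Measure 𝒳}
    {T : ℕ} (hT : 1 ≤ T) (hP : IsChangeLaw P F₀ F₁ T) (hP₀ : IsNoChangeLaw P₀ F₀)
    {τ : (ℕ → 𝒳) → ℕ∞} (hτ : IsStoppingTimeSeq τ) :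
    P {ω | (T : ℕ∞) ≤ τ ω} = P₀ {ω | (T : ℕ∞) ≤ τ ω} :=
  IsProductLaw.measure_eq_of_natFilt hP hP₀ (fun i _ hi => if_pos (by omega))
    (hτ.measurableSet_natFilt_le hT)

lemma map_simTuple {𝒳 Ωs : Type*} (B : ℕ) (M : (ℕ → 𝒳) → EReal) (Minf : Fin B → Ωs → EReal)
    (x : (ℕ → 𝒳) × Ωs) :
    Finset.univ.val.map (simTuple B M Minf · x) = M x.1 ::ₘ Finset.univ.val.map (Minf · x.2) := by
  simp [Fin.univ_val_map, List.ofFn_succ, simTuple]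

lemma le_iSup_quantileStat_of_le {Θ : Type*} {B : ℕ} {p q : Θ → Prop} {θ₀ θ₁ : Θ}
    (hp : p θ₀) (hq : q θ₁) {f : Θ → Θ → Fin B → EReal} {g : Fin B → EReal}
    (hgf : ∀ j, g j ≤ f θ₀ θ₁ j) {m : EReal} {c : ℝ}
    (hm : m ≤ quantileStat c (m ::ₘ Finset.univ.val.map g)) :
    m ≤ ⨆ θ, ⨆ (_ : p θ), ⨆ θ', ⨆ (_ : q θ'),
      quantileStat c (m ::ₘ Finset.univ.val.map (f θ θ')) := by
  refine le_iSup₂_of_le θ₀ hp (le_iSup₂_of_le θ₁ hq (hm.trans (quantileStat_mono ?_ c)))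
  exact (Multiset.rel_map.mpr (Multiset.rel_refl_of_refl_on fun j _ => hgf j)).cons le_rfl

theorem adaptive_parametric_coverage_general
    {𝒳 : Type*} [MeasurableSpace 𝒳] {Θ : Type*}
    (Θ₀ Θ₁ : Set Θ) (F : Θ → Measure 𝒳)
    (τ : (ℕ → 𝒳) → ℕ∞) (hτ : IsStoppingTimeSeq τ)
    -- `P t θ θ′` is the law `P_{θ,t,θ′}`
    (P : ℕ → Θ → Θ → Measure (ℕ → 𝒳))
    (hP : ∀ t : ℕ, 1 ≤ t → ∀ θ ∈ Θ₀, ∀ θ' ∈ Θ₁, IsChangeLaw (P t θ θ') (F θ) (F θ') t)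
    -- Assumption 1: least favorable pre-change parameter θ₀*
    (Pinfs : Measure (ℕ → 𝒳))
    (hass1 : ∀ θ ∈ Θ₀, ∀ t : ℕ, ∀ Pinf' : Measure (ℕ → 𝒳), IsNoChangeLaw Pinf' (F θ) →
      Pinfs {ω | (t : ℕ∞) ≤ τ ω} ≤ Pinf' {ω | (t : ℕ∞) ≤ τ ω})
    -- the observed statistic, with the convention `M_t = -∞` when `t > τ` or `τ = ∞`
    (M : ℕ → (ℕ → 𝒳) → EReal)
    (B : ℕ)
    -- simulation space carrying the simulated (truncated and untruncated) statistics
    {Ωs : Type*} [MeasurableSpace Ωs] (μs : Measure Ωs) [IsProbabilityMeasure μs]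
    (ML Minf : ℕ → Fin B → Θ → Θ → Ωs → EReal)
    (hLB : ∀ t j θ θ' w, Minf t j θ θ' w ≤ ML t j θ θ' w)
    -- for each fixed t and (θ, θ′) ∈ Θ₀ × Θ₁, under `P_{θ,t,θ′}` the tuple
    -- `(M_t, M_{t,∞}¹(θ,θ′), …, M_{t,∞}^B(θ,θ′))` is i.i.d.
    (hiid : ∀ t : ℕ, 1 ≤ t → ∀ θ ∈ Θ₀, ∀ θ' ∈ Θ₁,
      iIndepFun (simTuple B (M t) (fun j => Minf t j θ θ'))
        ((P t θ θ').prod μs) ∧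
      ∀ i : Fin (B + 1),
        IdentDistrib (simTuple B (M t) (fun j => Minf t j θ θ') i)
          (simTuple B (M t) (fun j => Minf t j θ θ') 0)
          ((P t θ θ').prod μs) ((P t θ θ').prod μs))
    -- the auxiliary randomization carrying the estimators `r_t*`
    {Ωr : Type*} [MeasurableSpace Ωr] (μr : Measure Ωr) [IsProbabilityMeasure μr]
    (r : ℕ → Ωr → ℝ) (hrmeas : ∀ t, Measurable (r t))
    (hrpos : ∀ t, ∀ᵐ a ∂μr, 0 < r t a) (hrint : ∀ t, Integrable (r t) μr)
    (hrunb : ∀ t : ℕ, ∫ a, r t a ∂μr = (Pinfs {ω | (t : ℕ∞) ≤ τ ω}).toReal)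
    -- the confidence interval procedure for the pre-change parameter
    (CIset : ℝ → ℕ → (ℕ → 𝒳) → Set Θ)
    (hCImeas : ∀ (t : ℕ) (θ : Θ), MeasurableSet {q : (ℕ → 𝒳) × ℝ | θ ∈ CIset q.2 t q.1})
    (hCI : ∀ c : ℝ, c ∈ Set.Ioo (0 : ℝ) 1 → ∀ t : ℕ, 1 ≤ t → ∀ θ ∈ Θ₀, ∀ θ' ∈ Θ₁,
      ENNReal.ofReal (1 - c) ≤ (P t θ θ') {ω | θ ∈ CIset c t ω})
    -- the confidence sequence procedure for the post-change parameter
    (CSset : ℝ → ℕ → ℕ → (ℕ → 𝒳) → Set Θ)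
    (hCSmeas : ∀ (t n : ℕ) (θ : Θ),
      MeasurableSet {q : (ℕ → 𝒳) × ℝ | θ ∈ CSset q.2 t n q.1})
    (hCS : ∀ c : ℝ, c ∈ Set.Ioo (0 : ℝ) 1 → ∀ t : ℕ, 1 ≤ t → ∀ θ ∈ Θ₀, ∀ θ' ∈ Θ₁,
      ENNReal.ofReal (1 - c) ≤ (P t θ θ') {ω | ∀ n : ℕ, t ≤ n → θ' ∈ CSset c t n ω})
    (α β γ : ℝ) (hα : α ∈ Set.Ioo (0 : ℝ) 1) (hβ : β ∈ Set.Ioo (0 : ℝ) 1)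
    (hγ : γ ∈ Set.Ioo (0 : ℝ) 1)
    (T : ℕ) (hT : 1 ≤ T)
    (θ₀ : Θ) (hθ₀ : θ₀ ∈ Θ₀) (θ₁ : Θ) (hθ₁ : θ₁ ∈ Θ₁)
    (Pinf₀ : Measure (ℕ → 𝒳)) (hPinf₀ : IsNoChangeLaw Pinf₀ (F θ₀))
    (hpos : Pinf₀ {ω | (T : ℕ∞) ≤ τ ω} ≠ 0) :
    ENNReal.ofReal (1 - α - β - γ) ≤
      ProbabilityTheory.cond ((P T θ₀ θ₁).prod (μs.prod μr))
        {q : (ℕ → 𝒳) × (Ωs × Ωr) | (T : ℕ∞) ≤ τ q.1}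
        {q : (ℕ → 𝒳) × (Ωs × Ωr) |
          T ∈ {t : ℕ | 1 ≤ t ∧ (t : ℕ∞) ≤ τ q.1 ∧
            M t q.1 ≤
              ⨆ θ : Θ, ⨆ (_ : θ ∈ CIset (γ * r t q.2.2) t q.1),
              ⨆ θ' : Θ, ⨆ (_ : stoppedCSMem τ CSset (β * r t q.2.2) t q.1 θ'),
                quantileStat (α * r t q.2.2)
                  ((M t q.1) ::ₘ
                    Multiset.map (fun j => ML t j θ θ' q.2.1)
                      (Finset.univ : Finset (Fin B)).val)}} := by
  obtain ⟨hind, hid⟩ := hiid T hT θ₀ hθ₀ θ₁ hθ₁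
  have hPT := hP T hT θ₀ hθ₀ θ₁ hθ₁
  have := hPT.1
  set E : Set (ℕ → 𝒳) := {ω | (T : ℕ∞) ≤ τ ω}
  have hE : MeasurableSet E := coordSigma_le_s10 _ _ (hτ.measurableSet_natFilt_le hT)
  have hQE : ((P T θ₀ θ₁).prod (μs.prod μr)) (Prod.fst ⁻¹' E) = P T θ₀ θ₁ E := by
    rw [← Set.prod_univ, Measure.prod_prod, measure_univ, mul_one]
  have hPE : P T θ₀ θ₁ E = Pinf₀ E := hPT.measure_le_stoppingTime_eq hT hPinf₀ hτ
  have hrE : ENNReal.ofReal (∫ a, r T a ∂μr) ≤ P T θ₀ θ₁ E := by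
    rw [hrunb, hPE]
    exact ENNReal.ofReal_toReal_le.trans (hass1 θ₀ hθ₀ T Pinf₀ hPinf₀)
  have hCSjoint : MeasurableSet {q : (ℕ → 𝒳) × ℝ | ∀ n, T ≤ n → θ₁ ∈ CSset q.2 T n q.1} := by
    simpa only [ofPred_forall] using
      MeasurableSet.iInter fun n => MeasurableSet.iInter fun (_ : T ≤ n) => hCSmeas T n θ₁
  have hbad := measure_prod_miscoverage_le (P T θ₀ θ₁) μs μr (hCImeas T θ₀)
    (S₂ := fun c => {ω | ∀ n, T ≤ n → θ₁ ∈ CSset c T n ω}) hCSjoint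
    (fun c hc => hCI c hc T hT θ₀ hθ₀ θ₁ hθ₁) (fun c hc => hCS c hc T hT θ₀ hθ₀ θ₁ hθ₁)
    hind hid (hrmeas T) (hrpos T) (hrint T) hα.1 hβ.1 hγ.1
  rw [show 1 - α - β - γ = 1 - (α + β + γ) by ring]
  refine ofReal_one_sub_le_cond (measurable_fst hE) (by rwa [hQE, hPE]) (measure_ne_top _ _)
    (by linarith [hα.1, hβ.1, hγ.1]) ?_
  rw [← (measurePreserving_prodAssoc _ _ _).measure_preimage_equiv, hQE]
  refine (measure_mono ?_).trans (hbad.trans (mul_le_mul_right hrE _))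
  rintro ⟨⟨ω, ws⟩, a⟩ ⟨hC, hA⟩
  by_contra hnot
  simp only [mem_union, not_or, not_not, mem_ofPred_eq] at hnot
  obtain ⟨⟨hci, hcs⟩, hq⟩ := hnot
  refine hA ⟨hT, hC, le_iSup_quantileStat_of_le hci (fun n hn _ => hcs n hn)
    (hLB T · θ₀ θ₁ ws) ?_⟩
  rw [not_lt, map_simTuple] at hq
  exact hq

/-- Adaptive confidence set for parametric pre- and post-change
classes: with
`C₁ := {t ≤ τ : M_t ≤ sup_{(θ,θ′) ∈ 𝒮_{t−1} × 𝒮′_{τ−t+1}} Quantile(1 − α r_t*; M_t, M_{t,L}¹(θ,θ′), …, M_{t,L}^B(θ,θ′))}`,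
`𝒮_{t−1} := CI(X₁,…,X_{t−1}; 1 − γ r_t*)` and `𝒮′_{τ−t+1} := CS(X_t,…,X_τ; 1 − β r_t*)`,
for any `θ₀ ∈ Θ₀`, `θ₁ ∈ Θ₁` and any detection stopping time `τ` satisfying Assumption 1
and `P_{θ₀,∞}(τ ≥ T) > 0`, `P_{θ₀,T,θ₁}(T ∈ C₁ | τ ≥ T) ≥ 1 − α − β − γ`. -/
theorem adaptive_parametric_coverage
    {𝒳 : Type*} [MeasurableSpace 𝒳] {Θ : Type*}
    (Θ₀ Θ₁ : Set Θ) (hdisj : Disjoint Θ₀ Θ₁) (F : Θ → Measure 𝒳)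
    (τ : (ℕ → 𝒳) → ℕ∞) (hτ : IsStoppingTimeSeq τ)
    -- `P t θ θ′` is the law `P_{θ,t,θ′}`
    (P : ℕ → Θ → Θ → Measure (ℕ → 𝒳))
    (hP : ∀ t : ℕ, 1 ≤ t → ∀ θ ∈ Θ₀, ∀ θ' ∈ Θ₁, IsChangeLaw (P t θ θ') (F θ) (F θ') t)
    -- Assumption 1: least favorable pre-change parameter θ₀*
    (θ₀s : Θ) (hθ₀s : θ₀s ∈ Θ₀)
    (Pinfs : Measure (ℕ → 𝒳)) (hPinfs : IsNoChangeLaw Pinfs (F θ₀s))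
    (hass1 : ∀ θ ∈ Θ₀, ∀ t : ℕ, ∀ Pinf' : Measure (ℕ → 𝒳), IsNoChangeLaw Pinf' (F θ) →
      Pinfs {ω | (t : ℕ∞) ≤ τ ω} ≤ Pinf' {ω | (t : ℕ∞) ≤ τ ω})
    -- the observed statistic, with the convention `M_t = -∞` when `t > τ` or `τ = ∞`
    (M : ℕ → (ℕ → 𝒳) → EReal) (hMmeas : ∀ t, Measurable (M t))
    (hMbot : ∀ (t : ℕ) (ω : ℕ → 𝒳), ¬ ((t : ℕ∞) ≤ τ ω ∧ τ ω ≠ ⊤) → M t ω = ⊥)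
    (B : ℕ)
    -- simulation space carrying the simulated (truncated and untruncated) statistics
    {Ωs : Type*} [MeasurableSpace Ωs] (μs : Measure Ωs) [IsProbabilityMeasure μs]
    (ML Minf : ℕ → Fin B → Θ → Θ → Ωs → EReal)
    (hMLmeas : ∀ t j θ θ', Measurable (ML t j θ θ'))
    (hLB : ∀ t j θ θ' w, Minf t j θ θ' w ≤ ML t j θ θ' w)
    -- for each fixed t and (θ, θ′) ∈ Θ₀ × Θ₁, under `P_{θ,t,θ′}` the tuple
    -- `(M_t, M_{t,∞}¹(θ,θ′), …, M_{t,∞}^B(θ,θ′))` is i.i.d.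
    (hiid : ∀ t : ℕ, 1 ≤ t → ∀ θ ∈ Θ₀, ∀ θ' ∈ Θ₁,
      iIndepFun (simTuple B (M t) (fun j => Minf t j θ θ'))
        ((P t θ θ').prod μs) ∧
      ∀ i : Fin (B + 1),
        IdentDistrib (simTuple B (M t) (fun j => Minf t j θ θ') i)
          (simTuple B (M t) (fun j => Minf t j θ θ') 0)
          ((P t θ θ').prod μs) ((P t θ θ').prod μs))
    -- the auxiliary randomization carrying the estimators `r_t*`
    {Ωr : Type*} [MeasurableSpace Ωr] (μr : Measure Ωr) [IsProbabilityMeasure μr]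
    (r : ℕ → Ωr → ℝ) (hrmeas : ∀ t, Measurable (r t))
    (hrpos : ∀ t, ∀ᵐ a ∂μr, 0 < r t a) (hrint : ∀ t, Integrable (r t) μr)
    (hrunb : ∀ t : ℕ, ∫ a, r t a ∂μr = (Pinfs {ω | (t : ℕ∞) ≤ τ ω}).toReal)
    -- the confidence interval procedure for the pre-change parameter
    (CIset : ℝ → ℕ → (ℕ → 𝒳) → Set Θ)
    (hCImeas : ∀ (t : ℕ) (θ : Θ), MeasurableSet {q : (ℕ → 𝒳) × ℝ | θ ∈ CIset q.2 t q.1})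
    (hCI : ∀ c : ℝ, c ∈ Set.Ioo (0 : ℝ) 1 → ∀ t : ℕ, 1 ≤ t → ∀ θ ∈ Θ₀, ∀ θ' ∈ Θ₁,
      ENNReal.ofReal (1 - c) ≤ (P t θ θ') {ω | θ ∈ CIset c t ω})
    -- the confidence sequence procedure for the post-change parameter
    (CSset : ℝ → ℕ → ℕ → (ℕ → 𝒳) → Set Θ)
    (hCSmeas : ∀ (t n : ℕ) (θ : Θ),
      MeasurableSet {q : (ℕ → 𝒳) × ℝ | θ ∈ CSset q.2 t n q.1})
    (hCS : ∀ c : ℝ, c ∈ Set.Ioo (0 : ℝ) 1 → ∀ t : ℕ, 1 ≤ t → ∀ θ ∈ Θ₀, ∀ θ' ∈ Θ₁,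
      ENNReal.ofReal (1 - c) ≤ (P t θ θ') {ω | ∀ n : ℕ, t ≤ n → θ' ∈ CSset c t n ω})
    (α β γ : ℝ) (hα : α ∈ Set.Ioo (0 : ℝ) 1) (hβ : β ∈ Set.Ioo (0 : ℝ) 1)
    (hγ : γ ∈ Set.Ioo (0 : ℝ) 1)
    (T : ℕ) (hT : 1 ≤ T)
    (θ₀ : Θ) (hθ₀ : θ₀ ∈ Θ₀) (θ₁ : Θ) (hθ₁ : θ₁ ∈ Θ₁)
    (Pinf₀ : Measure (ℕ → 𝒳)) (hPinf₀ : IsNoChangeLaw Pinf₀ (F θ₀))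
    (hpos : Pinf₀ {ω | (T : ℕ∞) ≤ τ ω} ≠ 0) :
    ENNReal.ofReal (1 - α - β - γ) ≤
      ProbabilityTheory.cond ((P T θ₀ θ₁).prod (μs.prod μr))
        {q : (ℕ → 𝒳) × (Ωs × Ωr) | (T : ℕ∞) ≤ τ q.1}
        {q : (ℕ → 𝒳) × (Ωs × Ωr) |
          T ∈ {t : ℕ | 1 ≤ t ∧ (t : ℕ∞) ≤ τ q.1 ∧
            M t q.1 ≤
              ⨆ θ : Θ, ⨆ (_ : θ ∈ CIset (γ * r t q.2.2) t q.1),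
              ⨆ θ' : Θ, ⨆ (_ : stoppedCSMem τ CSset (β * r t q.2.2) t q.1 θ'),
                quantileStat (α * r t q.2.2)
                  ((M t q.1) ::ₘ
                    Multiset.map (fun j => ML t j θ θ' q.2.1)
                      (Finset.univ : Finset (Fin B)).val)}} :=
  adaptive_parametric_coverage_general Θ₀ Θ₁ F τ hτ P hP Pinfs hass1 M B μs ML Minf hLB hiid μr r
    hrmeas hrpos hrint hrunb CIset hCImeas hCI CSset hCSmeas hCS α β γ hα hβ hγ T hT θ₀ hθ₀ θ₁ hθ₁
    Pinf₀ hPinf₀ hpos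

end SeqChange
end
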